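/- arXiv:2310.15279 — 9 statements merged into one kernel-verified Lean document; each statement's English description precedes it below -/
import Mathlib

section
/- Let A be an N×N invertible real matrix and ΔA an N×N real matrix with ‖A^{-1}·ΔA‖_∞ ≤ 1/2. Then the solution x of (A − ΔA)x = A·1 (where 1 is the all-ones vector) is entrywise nonnegative. -/
open Finset

/-- The operator norm induced by the `∞`-norm on vectors: the maximum over
rows of the sum of absolute values of entries in that row. -/
noncomputable def normInf {N : ℕ} (A : Matrix (Fin N) (Fin N) ℝ) : ℝ :=
  ⨆ i, ∑ j, |A i j|

theorem nonneg_solution_of_perturbation {N : ℕ} (A ΔA : Matrix (Fin N) (Fin N) ℝ)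
    (hA : IsUnit A) (hnorm : normInf (A⁻¹ * ΔA) ≤ 1 / 2)
    (x : Fin N → ℝ) (hx : (A - ΔA).mulVec x = A.mulVec (fun _ => 1)) :
    ∀ i, 0 ≤ x i := by
  set B := A⁻¹ * ΔA with hB
  have hdet : IsUnit A.det := (Matrix.isUnit_iff_isUnit_det A).mp hA
  have key : ∀ i, x i = 1 + B.mulVec x i := by
    have h := congrArg (A⁻¹.mulVec) hx
    rw [Matrix.mulVec_mulVec, Matrix.mulVec_mulVec] at h
    have h2 : A⁻¹ * (A - ΔA) = 1 - B := by
      rw [Matrix.mul_sub, Matrix.nonsing_inv_mul A hdet, hB]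
    rw [h2, Matrix.nonsing_inv_mul A hdet, Matrix.sub_mulVec, Matrix.one_mulVec,
      Matrix.one_mulVec] at h
    intro i
    have h3 := congrFun h i
    simp only [Pi.sub_apply] at h3
    linarith
  have hrow : ∀ i, ∑ j, |B i j| ≤ 1 / 2 := by
    intro i
    refine le_trans ?_ hnorm
    rw [normInf]
    exact le_ciSup (f := fun k => ∑ j, |B k j|) (Set.Finite.bddAbove (Set.finite_range _)) i
  intro i
  obtain ⟨i0, -, hi0⟩ := Finset.exists_max_image (univ : Finset (Fin N)) (fun k => |x k|)
    ⟨i, Finset.mem_univ i⟩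
  set M := |x i0| with hMdef
  have hM : ∀ j, |x j| ≤ M := fun j => hi0 j (Finset.mem_univ j)
  have hM0 : 0 ≤ M := abs_nonneg _
  have hbound : ∀ k, |B.mulVec x k| ≤ (1 / 2) * M := by
    intro k
    calc |B.mulVec x k| = |∑ j, B k j * x j| := rfl
      _ ≤ ∑ j, |B k j * x j| := Finset.abs_sum_le_sum_abs _ _
      _ = ∑ j, |B k j| * |x j| := by simp [abs_mul]
      _ ≤ ∑ j, |B k j| * M :=
        Finset.sum_le_sum fun j _ => mul_le_mul_of_nonneg_left (hM j) (abs_nonneg _)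
      _ = (∑ j, |B k j|) * M := by rw [Finset.sum_mul]
      _ ≤ (1 / 2) * M := mul_le_mul_of_nonneg_right (hrow k) hM0
  have hM2 : M ≤ 2 := by
    have hk := key i0
    have h1 : M ≤ 1 + |B.mulVec x i0| := by
      calc M = |1 + B.mulVec x i0| := by rw [hMdef, hk]
        _ ≤ |(1 : ℝ)| + |B.mulVec x i0| := abs_add_le _ _
        _ = 1 + |B.mulVec x i0| := by norm_num
    linarith [hbound i0]
  have h4 := abs_le.mp (hbound i)
  linarith [key i, h4.1]
end

section
/- Fix a row index i in the Sudoku graph G_{hw}. Define a vector v indexed by edges with v(r_i c_j) = 1 for all j, v(r_i s_k) = −1 for all k, and v(e) = 0 otherwise. Then v lies in the kernel of M = W·Wᵀ; equivalently, for every tile t, the sum of v over the four edges of t is zero. -/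
open Matrix Finset

/-- The (0-indexed) box containing cell `(i,j)` in a Sudoku grid of type `(h,w)`. -/
def box0 (h w : ℕ) (i j : Fin (h * w)) : Fin (h * w) :=
  ⟨h * ((i : ℕ) / h) + (j : ℕ) / w, by
    have hh : 0 < h := by
      rcases Nat.eq_zero_or_pos h with h0 | h0
      · exact absurd i.2 (by simp [h0])
      · exact h0
    have hw : 0 < w := by
      rcases Nat.eq_zero_or_pos w with h0 | h0
      · exact absurd i.2 (by simp [h0, Nat.mul_zero])
      · exact h0
    have h1 : (i : ℕ) / h < w := Nat.div_lt_of_lt_mul i.2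
    have h2 : (j : ℕ) / w < h := Nat.div_lt_of_lt_mul (lt_of_lt_of_eq j.2 (Nat.mul_comm h w))
    calc h * ((i : ℕ) / h) + (j : ℕ) / w < h * ((i : ℕ) / h) + h := by omega
      _ = h * ((i : ℕ) / h + 1) := by ring
      _ ≤ h * w := Nat.mul_le_mul_left h h1⟩

/-- Edges of the Sudoku graph `G_{hw}`: row-column, row-symbol, column-symbol,
and box-symbol pairs (in this order). -/
abbrev SEdge (h w : ℕ) :=
  (Fin (h * w) × Fin (h * w)) ⊕ (Fin (h * w) × Fin (h * w)) ⊕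
  (Fin (h * w) × Fin (h * w)) ⊕ (Fin (h * w) × Fin (h * w))

/-- The `{0,1}` incidence matrix of edges versus tiles of `G_{hw}`; a tile is
indexed by `(i,j,k)` (row, column, symbol) and consists of the four edges
`r_i c_j, r_i s_k, c_j s_k, b_ℓ s_k` where `ℓ = box0 h w i j`. -/
def Wmat (h w : ℕ) : Matrix (SEdge h w) (Fin (h * w) × Fin (h * w) × Fin (h * w)) ℝ :=
  fun e t => match e with
  | Sum.inl (i, j) => if t.1 = i ∧ t.2.1 = j then 1 else 0
  | Sum.inr (Sum.inl (i, k)) => if t.1 = i ∧ t.2.2 = k then 1 else 0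
  | Sum.inr (Sum.inr (Sum.inl (j, k))) => if t.2.1 = j ∧ t.2.2 = k then 1 else 0
  | Sum.inr (Sum.inr (Sum.inr (l, k))) => if box0 h w t.1 t.2.1 = l ∧ t.2.2 = k then 1 else 0

lemma sum2_helper {n : ℕ} (f : Fin n → ℝ) (a b : Fin n) :
    ∑ x : Fin n, ∑ y : Fin n, (if a = x ∧ b = y then f x else 0) = f a := by
  simp [ite_and, Finset.sum_ite_eq]

theorem kernel_vector_row (h w : ℕ) (hh : 2 ≤ h) (hw : 2 ≤ w) (i : Fin (h * w)) :
    ∀ v : SEdge h w → ℝ,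
      (∀ i' j, v (Sum.inl (i', j)) = if i' = i then 1 else 0) →
      (∀ i' k, v (Sum.inr (Sum.inl (i', k))) = if i' = i then -1 else 0) →
      (∀ j k, v (Sum.inr (Sum.inr (Sum.inl (j, k)))) = 0) →
      (∀ l k, v (Sum.inr (Sum.inr (Sum.inr (l, k)))) = 0) →
      ((∀ t, ∑ e, (Wmat h w)ᵀ t e * v e = 0) ∧
        (Wmat h w * (Wmat h w)ᵀ).mulVec v = 0) := by
  intro v hv1 hv2 hv3 hv4
  have key : ∀ t, ∑ e, (Wmat h w)ᵀ t e * v e = 0 := by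
    intro t
    simp only [Matrix.transpose_apply, Wmat, Fintype.sum_sum_type, Fintype.sum_prod_type,
      hv1, hv2, hv3, hv4, mul_zero, Finset.sum_const_zero, add_zero, ite_mul, one_mul, zero_mul]
    rw [sum2_helper (fun x => if x = i then (1:ℝ) else 0) t.1 t.2.1,
      sum2_helper (fun x => if x = i then (-1:ℝ) else 0) t.1 t.2.2]
    by_cases hti : t.1 = i <;> simp [hti]
  refine ⟨key, ?_⟩
  have hW : (Wmat h w)ᵀ.mulVec v = 0 := by
    funext t
    simpa [Matrix.mulVec, dotProduct] using key t
  rw [← Matrix.mulVec_mulVec, hW, Matrix.mulVec_zero]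
end

section
/- Fix a box index ℓ in the Sudoku graph G_{hw}. Define a vector v indexed by edges with v(r_i c_j) = 1 for all cells (i,j) with box(i,j) = ℓ, v(b_ℓ s_k) = −1 for all symbols k, and v(e) = 0 otherwise. Then for every tile t, the sum of v over the four edges of t is zero, so v ∈ ker(WWᵀ). -/
open Matrix Finset

theorem kernel_vector_box (h w : ℕ) (hh : 2 ≤ h) (hw : 2 ≤ w) (l : Fin (h * w)) :
    ∀ v : SEdge h w → ℝ,
      (∀ i j, v (Sum.inl (i, j)) = if box0 h w i j = l then 1 else 0) →
      (∀ i k, v (Sum.inr (Sum.inl (i, k))) = 0) →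
      (∀ j k, v (Sum.inr (Sum.inr (Sum.inl (j, k)))) = 0) →
      (∀ l' k, v (Sum.inr (Sum.inr (Sum.inr (l', k)))) = if l' = l then -1 else 0) →
      ((∀ t, ∑ e, (Wmat h w)ᵀ t e * v e = 0) ∧
        (Wmat h w * (Wmat h w)ᵀ).mulVec v = 0) := by
  intro v h1 h2 h3 h4
  have key : ∀ t, ∑ e, (Wmat h w)ᵀ t e * v e = 0 := by
    intro t
    obtain ⟨i, j, k⟩ := t
    rw [Fintype.sum_sum_type, Fintype.sum_sum_type, Fintype.sum_sum_type]
    simp only [transpose_apply, Wmat, Fintype.sum_prod_type]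
    simp only [h1, h2, h3, h4, mul_zero, sum_const_zero, ite_mul, one_mul, zero_mul,
      ← ite_and, and_assoc]
    simp [ite_and, Finset.sum_ite_eq]
    split <;> norm_num
  have hker : (Wmat h w)ᵀ.mulVec v = 0 := by
    funext t
    simpa [Matrix.mulVec, dotProduct] using key t
  refine ⟨key, ?_⟩
  rw [← Matrix.mulVec_mulVec, hker, Matrix.mulVec_zero]
end

section
/- Fix a row bundle B = {hp+1, ..., h(p+1)} and a symbol k. Define a vector v indexed by edges of G_{hw} with v(r_i s_k) = 1 for all i ∈ B, v(b_ℓ s_k) = −1 for all ℓ ∈ B, and v(e) = 0 otherwise. Then the sum of v over the four edges of any tile is zero, so v ∈ ker(WWᵀ). -/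
open Matrix Finset

theorem kernel_vector_bundle (h w : ℕ) (hh : 2 ≤ h) (hw : 2 ≤ w)
    (p : ℕ) (hp : p < w) (k : Fin (h * w)) :
    ∀ v : SEdge h w → ℝ,
      (∀ i j, v (Sum.inl (i, j)) = 0) →
      (∀ i k', v (Sum.inr (Sum.inl (i, k'))) =
        if (i : ℕ) / h = p ∧ k' = k then 1 else 0) →
      (∀ j k', v (Sum.inr (Sum.inr (Sum.inl (j, k')))) = 0) →
      (∀ l k', v (Sum.inr (Sum.inr (Sum.inr (l, k')))) =
        if (l : ℕ) / h = p ∧ k' = k then -1 else 0) →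
      ((∀ t, ∑ e, (Wmat h w)ᵀ t e * v e = 0) ∧
        (Wmat h w * (Wmat h w)ᵀ).mulVec v = 0) := by
  intro v h1 h2 h3 h4
  have key : ∀ t, ∑ e, (Wmat h w)ᵀ t e * v e = 0 := by
    rintro ⟨i, j, k'⟩
    have hbox : ((box0 h w i j : ℕ)) / h = (i : ℕ) / h := by
      have hh0 : 0 < h := by omega
      have hjw : (j : ℕ) / w < h := Nat.div_lt_of_lt_mul (by rw [Nat.mul_comm w h]; exact j.2)
      show (h * ((i : ℕ) / h) + (j : ℕ) / w) / h = (i : ℕ) / h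
      rw [Nat.mul_add_div hh0, Nat.div_eq_of_lt hjw, Nat.add_zero]
    rw [Fintype.sum_sum_type, Fintype.sum_sum_type, Fintype.sum_sum_type]
    simp only [transpose_apply, h1, h2, h3, h4, mul_zero, Finset.sum_const_zero,
      add_zero, zero_add, Wmat, Fintype.sum_prod_type, ite_mul, one_mul, zero_mul]
    simp [ite_and, Finset.sum_ite_eq, hbox]
    by_cases hip : (i : ℕ) / h = p <;> by_cases hkk : k' = k <;> simp [hip, hkk]
  refine ⟨key, ?_⟩
  have hz : (Wmat h w)ᵀ.mulVec v = 0 := funext fun t => key t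
  rw [← Matrix.mulVec_mulVec, hz, Matrix.mulVec_zero]
end

section
/- Let v be the edge-indexed vector defined by two distinct rows i₀ ≠ i₁ in the same row bundle and two distinct columns j₀ ≠ j₁: v(r_{i_α} c_{j_β}) = (−1)^{α+β} for α,β ∈ {0,1}, and v = 0 on all other edges. Then M·v = n·v, where M = WWᵀ is the Sudoku normal matrix. -/
open Matrix Finset

theorem eigenvector_theta1 (h w : ℕ) (hh : 2 ≤ h) (hw : 2 ≤ w)
    (i₀ i₁ j₀ j₁ : Fin (h * w)) (hi : i₀ ≠ i₁) (hj : j₀ ≠ j₁)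
    (hbundle : (i₀ : ℕ) / h = (i₁ : ℕ) / h) :
    ∀ v : SEdge h w → ℝ,
      (∀ i j, v (Sum.inl (i, j)) =
        (if i = i₀ then 1 else if i = i₁ then -1 else 0) *
        (if j = j₀ then 1 else if j = j₁ then -1 else 0)) →
      (∀ i k, v (Sum.inr (Sum.inl (i, k))) = 0) →
      (∀ j k, v (Sum.inr (Sum.inr (Sum.inl (j, k)))) = 0) →
      (∀ l k, v (Sum.inr (Sum.inr (Sum.inr (l, k)))) = 0) →
      (Wmat h w * (Wmat h w)ᵀ).mulVec v = ((h * w : ℕ) : ℝ) • v := by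
  intro v hrc hrs hcs hbs
  set a : Fin (h * w) → ℝ := fun i => if i = i₀ then 1 else if i = i₁ then -1 else 0 with ha
  set b : Fin (h * w) → ℝ := fun j => if j = j₀ then 1 else if j = j₁ then -1 else 0 with hb
  have key : ∀ (x₀ x₁ : Fin (h * w)), x₀ ≠ x₁ → ∀ (f : Fin (h * w) → ℝ),
      (∑ x, (if x = x₀ then (1:ℝ) else if x = x₁ then -1 else 0) * f x) = f x₀ - f x₁ := by
    intro x₀ x₁ hx f
    have hpt : ∀ x, (if x = x₀ then (1:ℝ) else if x = x₁ then -1 else 0) * f x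
        = (if x = x₀ then f x₀ else 0) + (if x = x₁ then -f x₁ else 0) := by
      intro x
      by_cases h0 : x = x₀
      · subst h0; simp [hx]
      · by_cases h1 : x = x₁ <;> simp [h0, h1, Ne.symm hx]
    simp only [hpt, Finset.sum_add_distrib, Finset.sum_ite_eq', Finset.mem_univ, if_true]
    ring
  have hsuma : (∑ i, a i) = 0 := by
    have := key i₀ i₁ hi (fun _ => (1:ℝ)); simpa [ha] using this
  have hsumb : (∑ j, b j) = 0 := by
    have := key j₀ j₁ hj (fun _ => (1:ℝ)); simpa [hb] using this
  rw [← Matrix.mulVec_mulVec]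
  have hu : (Wmat h w)ᵀ.mulVec v = fun t => a t.1 * b t.2.1 := by
    funext t
    simp only [Matrix.mulVec, Matrix.transpose_apply, dotProduct]
    rw [Fintype.sum_sum_type, Fintype.sum_sum_type, Fintype.sum_sum_type]
    simp only [Fintype.sum_prod_type, Wmat, hrc, hrs, hcs, hbs, mul_zero,
      Finset.sum_const_zero, add_zero, ite_mul, one_mul, zero_mul, ite_and]
    rw [Finset.sum_eq_single t.1]
    · rw [Finset.sum_eq_single t.2.1]
      · simp only [ha, hb, if_pos rfl]
        split_ifs <;> simp_all <;> ring
      · intro j _ hne; simp [Ne.symm hne]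
      · simp
    · intro i _ hne
      rw [Finset.sum_eq_zero]
      intro j _
      simp [Ne.symm hne]
    · simp
  rw [hu]
  funext e
  simp only [Matrix.mulVec, dotProduct, Pi.smul_apply, smul_eq_mul]
  match e with
  | Sum.inl (i, j) =>
      simp only [Wmat, Fintype.sum_prod_type, ite_mul, one_mul, zero_mul, ite_and, hrc]
      rw [Finset.sum_eq_single i]
      · rw [Finset.sum_eq_single j]
        · simp [ha, hb, mul_comm, mul_assoc, mul_left_comm]
          split_ifs <;>
            first
              | ring
              | exact absurd (‹_ = j₀›.symm.trans ‹_ = j₁›) hj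
              | exact absurd (‹_ = i₀›.symm.trans ‹_ = i₁›) hi
        · intro j' _ hne
          rw [Finset.sum_eq_zero]; intro k _; simp [hne]
        · simp
      · intro i' _ hne
        rw [Finset.sum_eq_zero]; intro j' _
        rw [Finset.sum_eq_zero]; intro k _; simp [hne]
      · simp
  | Sum.inr (Sum.inl (i, k)) =>
      simp only [Wmat, Fintype.sum_prod_type, ite_mul, one_mul, zero_mul, ite_and, hrs,
        mul_zero]
      rw [Finset.sum_eq_single i]
      · have h1 : ∀ j : Fin (h * w), (∑ k' : Fin (h * w), if k' = k then a i * b j else 0) = a i * b j := by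
          intro j; simp
        simp [h1, ← Finset.mul_sum, hsumb]
      · intro i' _ hne
        rw [Finset.sum_eq_zero]; intro j _
        rw [Finset.sum_eq_zero]; intro k' _; simp [hne]
      · simp
  | Sum.inr (Sum.inr (Sum.inl (j, k))) =>
      simp only [Wmat, Fintype.sum_prod_type, ite_mul, one_mul, zero_mul, ite_and, hcs,
        mul_zero]
      have inner : ∀ i : Fin (h * w),
          (∑ j', ∑ k', if j' = j then if k' = k then a i * b j' else 0 else 0) = a i * b j := by
        intro i
        rw [Finset.sum_eq_single j]
        · simp
        · intro j' _ hne
          rw [Finset.sum_eq_zero]; intro k' _; simp [hne]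
        · simp
      simp only [inner]
      rw [← Finset.sum_mul, hsuma, zero_mul]
  | Sum.inr (Sum.inr (Sum.inr (l, k))) =>
      simp only [Wmat, Fintype.sum_prod_type, ite_mul, one_mul, zero_mul, ite_and, hbs,
        mul_zero]
      have inner : ∀ (i j : Fin (h * w)),
          (∑ k', if box0 h w i j = l then if k' = k then a i * b j else 0 else 0)
            = (if box0 h w i j = l then (1:ℝ) else 0) * (a i * b j) := by
        intro i j
        by_cases hc : box0 h w i j = l <;> simp [hc]
      simp only [inner]
      rw [Finset.sum_comm]
      apply Finset.sum_eq_zero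
      intro j _
      have keya : ∀ f : Fin (h * w) → ℝ, (∑ x, a x * f x) = f i₀ - f i₁ := by
        intro f; simp only [ha]; exact key i₀ i₁ hi f
      have hbeq : box0 h w i₀ j = box0 h w i₁ j := by
        apply Fin.ext; simp [box0, hbundle]
      have hrw : (∑ x, (if box0 h w x j = l then (1:ℝ) else 0) * (a x * b j))
          = ∑ x, a x * ((if box0 h w x j = l then (1:ℝ) else 0) * b j) := by
        apply Finset.sum_congr rfl; intro x _; ring
      rw [hrw, keya, hbeq]
      ring
end

section
/- Let v be the edge-indexed vector defined by two distinct rows i₀ ≠ i₁ lying in the same row bundle: v(r_{i_α} c_j) = v(r_{i_α} s_k) = (−1)^α for all columns j and symbols k, α ∈ {0,1}, and v = 0 on all other edges (including all box-symbol edges). Then M·v = 2n·v. -/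
open Matrix Finset

/-- Auxiliary sign function: `1` at `i₀`, `-1` at `i₁`, `0` elsewhere. -/
def sgn {n : ℕ} (i₀ i₁ x : Fin n) : ℝ := if x = i₀ then 1 else if x = i₁ then -1 else 0

lemma sgn_sum {n : ℕ} (i₀ i₁ : Fin n) (h : i₀ ≠ i₁) : ∑ x : Fin n, sgn i₀ i₁ x = 0 := by
  have hx : ∀ x : Fin n, sgn i₀ i₁ x
      = (if x = i₀ then (1:ℝ) else 0) + (if x = i₁ then (-1:ℝ) else 0) := by
    intro x
    by_cases h0 : x = i₀
    · subst h0; simp [sgn, h]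
    · simp [sgn, h0]
  simp only [hx, Finset.sum_add_distrib, Finset.sum_ite_eq', Finset.mem_univ, if_true]
  ring

theorem eigenvector_theta2 (h w : ℕ) (hh : 2 ≤ h) (hw : 2 ≤ w)
    (i₀ i₁ : Fin (h * w)) (hi : i₀ ≠ i₁)
    (hbundle : (i₀ : ℕ) / h = (i₁ : ℕ) / h) :
    ∀ v : SEdge h w → ℝ,
      (∀ i j, v (Sum.inl (i, j)) =
        if i = i₀ then 1 else if i = i₁ then -1 else 0) →
      (∀ i k, v (Sum.inr (Sum.inl (i, k))) =
        if i = i₀ then 1 else if i = i₁ then -1 else 0) →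
      (∀ j k, v (Sum.inr (Sum.inr (Sum.inl (j, k)))) = 0) →
      (∀ l k, v (Sum.inr (Sum.inr (Sum.inr (l, k)))) = 0) →
      (Wmat h w * (Wmat h w)ᵀ).mulVec v = (2 * ((h * w : ℕ) : ℝ)) • v := by
  intro v hrc hrs hcs hbs
  have hrc' : ∀ i j, v (Sum.inl (i, j)) = sgn i₀ i₁ i := fun i j => hrc i j
  have hrs' : ∀ i k, v (Sum.inr (Sum.inl (i, k))) = sgn i₀ i₁ i := fun i k => hrs i k
  have hsum0 : ∑ x : Fin (h*w), sgn i₀ i₁ x = 0 := sgn_sum i₀ i₁ hi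
  have hbox : ∀ j, box0 h w i₀ j = box0 h w i₁ j := by
    intro j; apply Fin.ext; simp [box0, hbundle]
  have key : (Wmat h w)ᵀ.mulVec v = fun t => 2 * sgn i₀ i₁ t.1 := by
    funext t
    simp only [Matrix.mulVec, Matrix.transpose_apply, dotProduct, Fintype.sum_sum_type,
      Fintype.sum_prod_type, Wmat]
    simp only [hrc', hrs', hcs, hbs, mul_zero, Finset.sum_const_zero, add_zero,
      ite_mul, one_mul, zero_mul, ite_and, Finset.sum_ite_irrel]
    simp only [Finset.sum_ite_eq', Finset.mem_univ, if_true, Finset.sum_ite_eq]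
    ring
  rw [← Matrix.mulVec_mulVec, key]
  funext e
  obtain (⟨i,j⟩ | ⟨i,k⟩ | ⟨j,k⟩ | ⟨l,k⟩) := e
  · simp only [Matrix.mulVec, dotProduct, Fintype.sum_prod_type, Wmat, ite_and, ite_mul,
      one_mul, zero_mul, Finset.sum_ite_irrel, Finset.sum_const_zero, Finset.sum_const,
      Finset.card_univ, Fintype.card_fin, nsmul_eq_mul,
      Finset.sum_ite_eq', Finset.mem_univ, if_true, Pi.smul_apply, smul_eq_mul, hrc']
    have hclean : (∑ x : Fin (h*w), ∑ _x1 : Fin (h*w),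
          if x = j then 2 * sgn i₀ i₁ i else 0) = 2 * ((h*w : ℕ) : ℝ) * sgn i₀ i₁ i := by
      simp only [Finset.sum_const, Finset.card_univ, Fintype.card_fin, nsmul_eq_mul,
        mul_ite, mul_zero, Finset.sum_ite_eq', Finset.mem_univ, if_true]
      ring
    exact hclean
  · simp only [Matrix.mulVec, dotProduct, Fintype.sum_prod_type, Wmat, ite_and, ite_mul,
      one_mul, zero_mul, Finset.sum_ite_irrel, Finset.sum_const_zero, Finset.sum_const,
      Finset.card_univ, Fintype.card_fin, nsmul_eq_mul,
      Finset.sum_ite_eq', Finset.mem_univ, if_true, Pi.smul_apply, smul_eq_mul, hrs']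
    ring
  · simp only [Matrix.mulVec, dotProduct, Fintype.sum_prod_type, Wmat, ite_and, ite_mul,
      one_mul, zero_mul, Finset.sum_ite_irrel, Finset.sum_const_zero,
      Finset.sum_ite_eq', Finset.mem_univ, if_true, Pi.smul_apply, smul_eq_mul, hcs]
    rw [← Finset.mul_sum, hsum0]
    ring
  · simp only [Matrix.mulVec, dotProduct, Fintype.sum_prod_type, Wmat, ite_and, ite_mul,
      one_mul, zero_mul, Finset.sum_ite_irrel, Finset.sum_const_zero,
      Finset.sum_ite_eq', Finset.mem_univ, if_true, Pi.smul_apply, smul_eq_mul, hbs,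
      mul_zero]
    rw [Finset.sum_comm]
    apply Finset.sum_eq_zero
    intro x1 _
    have hx : ∀ x : Fin (h*w),
        (if box0 h w x x1 = l then 2 * sgn i₀ i₁ x else 0)
        = (if x = i₀ then (if box0 h w i₀ x1 = l then (2:ℝ) else 0) else 0)
          + (if x = i₁ then -(if box0 h w i₁ x1 = l then (2:ℝ) else 0) else 0) := by
      intro x
      by_cases h0 : x = i₀
      · subst h0; simp [sgn, hi]
      · by_cases h1 : x = i₁
        · subst h1
          simp only [sgn, if_pos rfl, if_neg h0, zero_add]
          by_cases h2 : box0 h w x x1 = l <;> simp [h2]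
        · simp [sgn, h0, h1]
    rw [Finset.sum_congr rfl (fun x _ => hx x), Finset.sum_add_distrib]
    simp only [Finset.sum_ite_eq', Finset.mem_univ, if_true, hbox x1]
    ring
end

section
/- Let v be the edge-indexed vector defined by two distinct symbols k₀ ≠ k₁: v(r_i s_{k_γ}) = v(c_j s_{k_γ}) = v(b_ℓ s_{k_γ}) = (−1)^γ for all i, j, ℓ and γ ∈ {0,1}, with v = 0 on row-column edges. Then M·v = 3n·v, where M = WWᵀ. -/
open Matrix Finset

lemma sum_indicator_div (n h a : ℕ) (hh : 0 < h) (hn : a * h + h ≤ n) :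
    ∑ i : Fin n, (if (i : ℕ) / h = a then (1 : ℝ) else 0) = h := by
  rw [Fin.sum_univ_eq_sum_range (fun i => if i / h = a then (1 : ℝ) else 0),
    ← Finset.sum_filter]
  have hfil : (Finset.range n).filter (fun i => i / h = a) =
      Finset.Ico (a * h) (a * h + h) := by
    ext x
    simp only [Finset.mem_filter, Finset.mem_range, Finset.mem_Ico]
    constructor
    · rintro ⟨hx, rfl⟩
      have h1 := Nat.div_add_mod x h
      have h2 := Nat.mod_lt x hh
      have h3 : x / h * h = h * (x / h) := Nat.mul_comm _ _
      omega
    · rintro ⟨h1, h2⟩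
      have e : (a + 1) * h = a * h + h := by ring
      exact ⟨by omega, Nat.div_eq_of_lt_le (by omega) (by omega)⟩
  rw [hfil]
  simp

lemma box0_iff (h w : ℕ) (hh : 0 < h) (i j l : Fin (h * w)) :
    box0 h w i j = l ↔ ((i : ℕ) / h = (l : ℕ) / h ∧ (j : ℕ) / w = (l : ℕ) % h) := by
  rw [Fin.ext_iff]
  show (h * ((i : ℕ) / h) + (j : ℕ) / w = (l : ℕ)) ↔ _
  have h2 : (j : ℕ) / w < h := Nat.div_lt_of_lt_mul (lt_of_lt_of_eq j.2 (Nat.mul_comm h w))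
  constructor
  · intro e
    rw [← e]
    constructor
    · rw [Nat.mul_add_div hh, Nat.div_eq_of_lt h2]; omega
    · rw [Nat.mul_add_mod, Nat.mod_eq_of_lt h2]
  · rintro ⟨e1, e2⟩
    rw [e1, e2]
    exact Nat.div_add_mod _ h

lemma box0_count (h w : ℕ) (hh : 0 < h) (hw : 0 < w) (l : Fin (h * w)) :
    ∑ i : Fin (h * w), ∑ j : Fin (h * w),
      (if box0 h w i j = l then (1 : ℝ) else 0) = (h * w : ℕ) := by
  have hl : (l : ℕ) / h < w := Nat.div_lt_of_lt_mul l.2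
  have hlm : (l : ℕ) % h < h := Nat.mod_lt _ hh
  calc ∑ i : Fin (h * w), ∑ j : Fin (h * w), (if box0 h w i j = l then (1 : ℝ) else 0)
      = ∑ i : Fin (h * w), ∑ j : Fin (h * w),
        (if (i : ℕ) / h = (l : ℕ) / h then (1:ℝ) else 0) *
        (if (j : ℕ) / w = (l : ℕ) % h then (1:ℝ) else 0) := by
        refine Finset.sum_congr rfl fun i _ => Finset.sum_congr rfl fun j _ => ?_
        simp only [box0_iff h w hh i j l]
        by_cases h1 : (i : ℕ) / h = (l : ℕ) / h <;>
          by_cases h2 : (j : ℕ) / w = (l : ℕ) % h <;> simp [h1, h2]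
    _ = (∑ i : Fin (h * w), (if (i : ℕ) / h = (l : ℕ) / h then (1:ℝ) else 0)) *
        (∑ j : Fin (h * w), (if (j : ℕ) / w = (l : ℕ) % h then (1:ℝ) else 0)) := by
        rw [Finset.sum_mul_sum]
    _ = ((h * w : ℕ) : ℝ) := by
        rw [sum_indicator_div (h * w) h _ hh (by nlinarith),
          sum_indicator_div (h * w) w _ hw (by nlinarith)]
        push_cast; ring

theorem eigenvector_theta3 (h w : ℕ) (hh : 2 ≤ h) (hw : 2 ≤ w)
    (k₀ k₁ : Fin (h * w)) (hk : k₀ ≠ k₁) :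
    ∀ v : SEdge h w → ℝ,
      (∀ i j, v (Sum.inl (i, j)) = 0) →
      (∀ i k, v (Sum.inr (Sum.inl (i, k))) =
        if k = k₀ then 1 else if k = k₁ then -1 else 0) →
      (∀ j k, v (Sum.inr (Sum.inr (Sum.inl (j, k)))) =
        if k = k₀ then 1 else if k = k₁ then -1 else 0) →
      (∀ l k, v (Sum.inr (Sum.inr (Sum.inr (l, k)))) =
        if k = k₀ then 1 else if k = k₁ then -1 else 0) →
      (Wmat h w * (Wmat h w)ᵀ).mulVec v = (3 * ((h * w : ℕ) : ℝ)) • v := by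
  intro v hv0 hv1 hv2 hv3
  have hh0 : 0 < h := by omega
  have hw0 : 0 < w := by omega
  set σ : Fin (h * w) → ℝ := fun k => if k = k₀ then 1 else if k = k₁ then -1 else 0 with hσ
  have hσsum : ∑ k : Fin (h * w), σ k = 0 := by
    have : ∀ k : Fin (h * w), σ k =
        (if k = k₀ then (1:ℝ) else 0) + (if k = k₁ then (-1:ℝ) else 0) := by
      intro k
      rw [hσ]
      by_cases e0 : k = k₀
      · subst e0; simp [Ne.symm hk, hk]
      · by_cases e1 : k = k₁ <;> simp [e0, e1, Ne.symm hk]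
    rw [Finset.sum_congr rfl fun k _ => this k, Finset.sum_add_distrib]
    simp
  rw [← mulVec_mulVec]
  have hu : (Wmat h w)ᵀ.mulVec v = fun t => 3 * σ t.2.2 := by
    funext t
    obtain ⟨i, j, k⟩ := t
    simp only [mulVec, dotProduct, transpose_apply, Fintype.sum_sum_type,
      Fintype.sum_prod_type, Wmat]
    simp only [hv0, hv1, hv2, hv3, mul_zero, ite_mul, one_mul, zero_mul, ite_and]
    simp only [Finset.sum_ite_eq, Finset.sum_ite_eq', Finset.mem_univ, if_true,
      Finset.sum_const_zero, Finset.sum_ite_irrel]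
    rw [hσ]
    ring
  rw [hu]
  funext e
  simp only [Pi.smul_apply, smul_eq_mul]
  match e with
  | Sum.inl (i, j) =>
      simp only [mulVec, dotProduct, Fintype.sum_prod_type, Wmat, ite_and, ite_mul,
        one_mul, zero_mul]
      simp only [Finset.sum_ite_eq, Finset.sum_ite_eq', Finset.mem_univ, if_true,
        Finset.sum_const_zero, Finset.sum_ite_irrel, hv0]
      rw [← Finset.mul_sum, hσsum]
      ring
  | Sum.inr (Sum.inl (i, k)) =>
      simp only [mulVec, dotProduct, Fintype.sum_prod_type, Wmat, ite_and, ite_mul,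
        one_mul, zero_mul]
      simp only [Finset.sum_ite_eq, Finset.sum_ite_eq', Finset.mem_univ, if_true,
        Finset.sum_const_zero, Finset.sum_ite_irrel, hv1]
      simp only [Finset.sum_const, nsmul_eq_mul, Fintype.card_fin, Finset.card_univ]
      rw [hσ]
      ring
  | Sum.inr (Sum.inr (Sum.inl (j, k))) =>
      simp only [mulVec, dotProduct, Fintype.sum_prod_type, Wmat, ite_and, ite_mul,
        one_mul, zero_mul]
      simp only [Finset.sum_ite_eq, Finset.sum_ite_eq', Finset.mem_univ, if_true,
        Finset.sum_const_zero, Finset.sum_ite_irrel, hv2]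
      simp only [Finset.sum_const, nsmul_eq_mul, Fintype.card_fin, Finset.card_univ]
      rw [hσ]
      ring
  | Sum.inr (Sum.inr (Sum.inr (l, k))) =>
      simp only [mulVec, dotProduct, Fintype.sum_prod_type, Wmat, ite_and, ite_mul,
        one_mul, zero_mul]
      simp only [Finset.sum_ite_eq, Finset.sum_ite_eq', Finset.mem_univ, if_true,
        Finset.sum_const_zero, Finset.sum_ite_irrel, hv3]
      have : ∀ a b : Fin (h * w),
          (if box0 h w a b = l then 3 * σ k else 0) =
          (if box0 h w a b = l then (1:ℝ) else 0) * (3 * σ k) := by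
        intro a b; split <;> ring
      calc (∑ a : Fin (h*w), ∑ b : Fin (h*w), if box0 h w a b = l then 3 * σ k else 0)
          = (∑ a : Fin (h*w), ∑ b : Fin (h*w),
              (if box0 h w a b = l then (1:ℝ) else 0)) * (3 * σ k) := by
            rw [Finset.sum_mul]
            refine Finset.sum_congr rfl fun a _ => ?_
            rw [Finset.sum_mul]
            exact Finset.sum_congr rfl fun b _ => this a b
        _ = 3 * ((h * w : ℕ) : ℝ) * σ k := by
            rw [box0_count h w hh0 hw0 l]; ring
        _ = _ := by rw [hσ]
end

section
/- An ε-dense partial Sudoku S of type (h,w) has the (1−3ε)-availability property: every edge of G_S is contained in at least (1−3ε)n tiles of G_S. -/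
open Matrix Finset

/-- A tile `(i,j,k)` of `G_S`: all four of its edges survive in `G_S`, i.e.
cell `(i,j)` is empty and symbol `k` is missing from row `i`, column `j`,
and the box containing `(i,j)`. -/
def FreeTile (h w : ℕ) (S : Fin (h * w) → Fin (h * w) → Option (Fin (h * w)))
    (i j k : Fin (h * w)) : Prop :=
  S i j = none ∧ (∀ j', S i j' ≠ some k) ∧ (∀ i', S i' j ≠ some k) ∧
    (∀ i' j', box0 h w i' j' = box0 h w i j → S i' j' ≠ some k)

instance (h w : ℕ) (S : Fin (h * w) → Fin (h * w) → Option (Fin (h * w)))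
    (i j k : Fin (h * w)) : Decidable (FreeTile h w S i j k) := by
  unfold FreeTile; infer_instance

section Counting

variable {α β : Type*}

theorem le_card_filter_of_cover {s A B C : Finset α} {p : α → Prop} [DecidablePred p] {ε n : ℝ}
    (hs : n ≤ #s) (hcover : ∀ x ∈ s, ¬ p x → x ∈ A ∨ x ∈ B ∨ x ∈ C)
    (hA : #A ≤ ε * n) (hB : #B ≤ ε * n) (hC : #C ≤ ε * n) :
    (1 - 3 * ε) * n ≤ #{x ∈ s | p x} := by
  classical
  have hbad : {x ∈ s | ¬ p x} ⊆ A ∪ B ∪ C := by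
    intro x hx
    rw [mem_filter] at hx
    simpa only [mem_union, or_assoc] using hcover x hx.1 hx.2
  have hsplit : #s ≤ #{x ∈ s | p x} + (#A + #B + #C) := by
    rw [← card_filter_add_card_filter_not p]
    gcongr
    calc #{x ∈ s | ¬ p x} ≤ #(A ∪ B ∪ C) := card_le_card hbad
      _ ≤ #(A ∪ B) + #C := card_union_le _ _
      _ ≤ #A + #B + #C := by gcongr; exact card_union_le _ _
  have hsplit' : (#s : ℝ) ≤ #{x ∈ s | p x} + (#A + #B + #C) := by exact_mod_cast hsplit
  linarith

theorem card_filter_exists_eq_some_le [Fintype β] [DecidableEq β] (s : Finset α)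
    (f : α → Option β) : #{b | ∃ a ∈ s, f a = some b} ≤ #{a ∈ s | f a ≠ none} := by
  calc #{b | ∃ a ∈ s, f a = some b}
      = #(({b | ∃ a ∈ s, f a = some b} : Finset β).map Function.Embedding.some) :=
        (card_map _).symm
    _ ≤ #({a ∈ s | f a ≠ none}.image f) := by
        refine card_le_card fun x hx => ?_
        obtain ⟨b, hb, rfl⟩ := mem_map.1 hx
        obtain ⟨a, ha, hab⟩ := (mem_filter.1 hb).2
        exact mem_image.2 ⟨a, mem_filter.2 ⟨ha, by simp [hab]⟩, hab⟩
    _ ≤ #{a ∈ s | f a ≠ none} := card_image_le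

theorem card_le_mul_of_card_fiber_le [DecidableEq β] {s : Finset α} {t : Finset β} {f : α → β}
    (hf : ∀ a ∈ s, f a ∈ t) {c : ℝ} (hc : ∀ b ∈ t, #{a ∈ s | f a = b} ≤ c) :
    #s ≤ #t * c := by
  rw [card_eq_sum_card_fiberwise hf, Nat.cast_sum]
  calc ∑ b ∈ t, (#{a ∈ s | f a = b} : ℝ) ≤ ∑ _b ∈ t, c := sum_le_sum hc
    _ = #t * c := by rw [sum_const, nsmul_eq_mul]

theorem card_biUnion_le_of_card_eq [DecidableEq α] {t : Finset β} {F : β → Finset α} {m : ℕ}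
    (hF : ∀ b ∈ t, #(F b) = m) {c : ℝ} (ht : #t ≤ c) : #(t.biUnion F) ≤ c * m := by
  have hle : #(t.biUnion F) ≤ #t * m := card_biUnion_le_card_mul _ _ _ fun b hb => (hF b hb).le
  calc (#(t.biUnion F) : ℝ) ≤ #t * m := by exact_mod_cast hle
    _ ≤ c * m := by gcongr

theorem card_filter_fin_div_eq {n d c : ℕ} (hd : 0 < d) (hc : (c + 1) * d ≤ n) :
    #{i : Fin n | (i : ℕ) / d = c} = d := by
  rw [add_one_mul] at hc
  have hmap : ({i : Fin n | (i : ℕ) / d = c} : Finset _).map Fin.valEmbedding =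
      Ico (c * d) (c * d + d) := by
    ext x
    simp only [mem_map, mem_filter, mem_univ, true_and, Fin.valEmbedding_apply, mem_Ico,
      Nat.div_eq_iff hd]
    constructor
    · rintro ⟨i, hi, rfl⟩
      omega
    · intro hx
      exact ⟨⟨x, by omega⟩, by simp only; omega, rfl⟩
  rw [← card_map, hmap, Nat.card_Ico]
  omega

end Counting

section Sudoku

variable {h w : ℕ}

theorem pos_left_of_fin_mul (i : Fin (h * w)) : 0 < h := Nat.pos_of_mul_pos_right i.pos

theorem pos_right_of_fin_mul (i : Fin (h * w)) : 0 < w := Nat.pos_of_mul_pos_left i.pos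

theorem div_lt_left_of_fin_mul (i : Fin (h * w)) : (i : ℕ) / h < w := Nat.div_lt_of_lt_mul i.2

theorem div_lt_right_of_fin_mul (i : Fin (h * w)) : (i : ℕ) / w < h :=
  Nat.div_lt_of_lt_mul (i.2.trans_eq (mul_comm h w))

theorem card_rowBundle {c : ℕ} (hh : 0 < h) (hc : c < w) :
    #{i : Fin (h * w) | (i : ℕ) / h = c} = h :=
  card_filter_fin_div_eq hh (by rw [mul_comm]; exact Nat.mul_le_mul_left h hc)

theorem card_colBundle {c : ℕ} (hw : 0 < w) (hc : c < h) :
    #{j : Fin (h * w) | (j : ℕ) / w = c} = w :=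
  card_filter_fin_div_eq hw (Nat.mul_le_mul_right w hc)

theorem box0_eq_iff {i j l : Fin (h * w)} :
    box0 h w i j = l ↔ (i : ℕ) / h = l / h ∧ (j : ℕ) / w = l % h := by
  have hh := pos_left_of_fin_mul i
  have hj := div_lt_right_of_fin_mul j
  rw [Fin.ext_iff]
  change h * ((i : ℕ) / h) + (j : ℕ) / w = l ↔ _
  constructor
  · intro hl
    rw [← hl, Nat.mul_add_div hh, Nat.div_eq_of_lt hj, Nat.mul_add_mod, Nat.mod_eq_of_lt hj]
    simp
  · rintro ⟨hil, hjl⟩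
    rw [hil, hjl, Nat.div_add_mod]

theorem box0_eq_box0_iff {i j i' j' : Fin (h * w)} :
    box0 h w i' j' = box0 h w i j ↔ (i' : ℕ) / h = i / h ∧ (j' : ℕ) / w = j / w := by
  obtain ⟨hi, hj⟩ := box0_eq_iff.1 (rfl : box0 h w i j = box0 h w i j)
  rw [box0_eq_iff, ← hi, ← hj]

theorem filter_box0_eq (l : Fin (h * w)) :
    ({p | box0 h w p.1 p.2 = l} : Finset (Fin (h * w) × Fin (h * w))) =
      ({i | (i : ℕ) / h = l / h} : Finset (Fin (h * w))) ×ˢ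
        ({j | (j : ℕ) / w = l % h} : Finset (Fin (h * w))) := by
  rw [← filter_product, univ_product_univ]
  simp only [box0_eq_iff]

theorem card_filter_box0_eq (l : Fin (h * w)) :
    #{p : Fin (h * w) × Fin (h * w) | box0 h w p.1 p.2 = l} = h * w := by
  have hh := pos_left_of_fin_mul l
  rw [filter_box0_eq, card_product, card_rowBundle hh (div_lt_left_of_fin_mul l),
    card_colBundle (pos_right_of_fin_mul l) (Nat.mod_lt _ hh)]

variable (S : Fin (h * w) → Fin (h * w) → Option (Fin (h * w))) {ε : ℝ}

theorem card_symbol_le_of_rowBundle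
    {k : Fin (h * w)} (hsymrow : ∀ p < w,
      (#{q : Fin (h * w) × Fin (h * w) | (q.1 : ℕ) / h = p ∧ S q.1 q.2 = some k} : ℝ) ≤ ε * h) :
    #{q : Fin (h * w) × Fin (h * w) | S q.1 q.2 = some k} ≤ ε * (h * w) := by
  have hle := card_le_mul_of_card_fiber_le (s := {q | S q.1 q.2 = some k})
    (f := fun q : Fin (h * w) × Fin (h * w) => (q.1 : ℕ) / h) (c := ε * h)
    (fun q _ => mem_range.2 (div_lt_left_of_fin_mul q.1))
    fun p hp => by rw [filter_filter]; simpa only [and_comm] using hsymrow p (mem_range.1 hp)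
  rw [card_range] at hle
  linarith

theorem card_symbol_le_of_colBundle
    {k : Fin (h * w)} (hsymcol : ∀ p < h,
      (#{q : Fin (h * w) × Fin (h * w) | (q.2 : ℕ) / w = p ∧ S q.1 q.2 = some k} : ℝ) ≤ ε * w) :
    #{q : Fin (h * w) × Fin (h * w) | S q.1 q.2 = some k} ≤ ε * (h * w) := by
  have hle := card_le_mul_of_card_fiber_le (s := {q | S q.1 q.2 = some k})
    (f := fun q : Fin (h * w) × Fin (h * w) => (q.2 : ℕ) / w) (c := ε * w)
    (fun q _ => mem_range.2 (div_lt_right_of_fin_mul q.2))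
    fun p hp => by rw [filter_filter]; simpa only [and_comm] using hsymcol p (mem_range.1 hp)
  rw [card_range] at hle
  linarith

theorem availability_rowCol
    (hrow : ∀ i, (#{j | S i j ≠ none} : ℝ) ≤ ε * (h * w))
    (hcol : ∀ j, (#{i | S i j ≠ none} : ℝ) ≤ ε * (h * w))
    (hbox : ∀ l, (#{p : Fin (h * w) × Fin (h * w) |
        box0 h w p.1 p.2 = l ∧ S p.1 p.2 ≠ none} : ℝ) ≤ ε * (h * w))
    {i j : Fin (h * w)} (hij : S i j = none) :
    (1 - 3 * ε) * (h * w) ≤ #{k | FreeTile h w S i j k} := by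
  have hA := (Nat.cast_le.2 (card_filter_exists_eq_some_le univ (S i))).trans (hrow i)
  have hB := (Nat.cast_le.2 (card_filter_exists_eq_some_le univ (S · j))).trans (hcol j)
  have hC := (Nat.cast_le.2 (card_filter_exists_eq_some_le
    {p : Fin (h * w) × Fin (h * w) | box0 h w p.1 p.2 = box0 h w i j} (fun p => S p.1 p.2))).trans
    (by rw [filter_filter]; exact hbox _)
  refine le_card_filter_of_cover (by simp) (fun k _ hk => ?_) hA hB hC
  simp only [mem_filter, mem_univ, true_and, Prod.exists]
  by_contra! hfree
  exact hk ⟨hij, hfree.1, hfree.2.1, hfree.2.2⟩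

theorem availability_rowSymbol
    (hrow : ∀ i, (#{j | S i j ≠ none} : ℝ) ≤ ε * (h * w))
    (hsymrow : ∀ k : Fin (h * w), ∀ p < w,
      (#{q : Fin (h * w) × Fin (h * w) | (q.1 : ℕ) / h = p ∧ S q.1 q.2 = some k} : ℝ) ≤ ε * h)
    {i k : Fin (h * w)} (hk : ∀ j, S i j ≠ some k) :
    (1 - 3 * ε) * (h * w) ≤ #{j | FreeTile h w S i j k} := by
  have hB : (#(({q | S q.1 q.2 = some k} : Finset (Fin (h * w) × Fin (h * w))).image Prod.snd) : ℝ)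
      ≤ ε * (h * w) :=
    (Nat.cast_le.2 card_image_le).trans (card_symbol_le_of_rowBundle S (hsymrow k))
  have hC := (card_biUnion_le_of_card_eq
    (F := fun q : Fin (h * w) × Fin (h * w) => {j : Fin (h * w) | (j : ℕ) / w = q.2 / w})
    (fun q _ => card_colBundle (pos_right_of_fin_mul i) (div_lt_right_of_fin_mul q.2))
    (hsymrow k _ (div_lt_left_of_fin_mul i))).trans_eq (mul_assoc _ _ _)
  refine le_card_filter_of_cover (by simp) (fun j _ hj => ?_) (hrow i) hB hC
  by_contra! hfree
  refine hj ⟨by simpa using hfree.1, hk, fun i' hi' => hfree.2.1 ?_, fun i' j' hb hs => hfree.2.2 ?_⟩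
  · exact mem_image.2 ⟨(i', j), mem_filter.2 ⟨mem_univ _, hi'⟩, rfl⟩
  · obtain ⟨hi, hj⟩ := box0_eq_box0_iff.1 hb
    exact mem_biUnion.2 ⟨(i', j'), mem_filter.2 ⟨mem_univ _, hi, hs⟩,
      mem_filter.2 ⟨mem_univ _, hj.symm⟩⟩

theorem availability_colSymbol
    (hcol : ∀ j, (#{i | S i j ≠ none} : ℝ) ≤ ε * (h * w))
    (hsymcol : ∀ k : Fin (h * w), ∀ p < h,
      (#{q : Fin (h * w) × Fin (h * w) | (q.2 : ℕ) / w = p ∧ S q.1 q.2 = some k} : ℝ) ≤ ε * w)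
    {j k : Fin (h * w)} (hk : ∀ i, S i j ≠ some k) :
    (1 - 3 * ε) * (h * w) ≤ #{i | FreeTile h w S i j k} := by
  have hB : (#(({q | S q.1 q.2 = some k} : Finset (Fin (h * w) × Fin (h * w))).image Prod.fst) : ℝ)
      ≤ ε * (h * w) :=
    (Nat.cast_le.2 card_image_le).trans (card_symbol_le_of_colBundle S (hsymcol k))
  have hC := (card_biUnion_le_of_card_eq
    (F := fun q : Fin (h * w) × Fin (h * w) => {i : Fin (h * w) | (i : ℕ) / h = q.1 / h})
    (fun q _ => card_rowBundle (pos_left_of_fin_mul j) (div_lt_left_of_fin_mul q.1))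
    (hsymcol k _ (div_lt_right_of_fin_mul j))).trans_eq
    ((mul_right_comm _ _ _).trans (mul_assoc _ _ _))
  refine le_card_filter_of_cover (by simp) (fun i _ hi => ?_) (hcol j) hB hC
  by_contra! hfree
  refine hi ⟨by simpa using hfree.1, fun j' hj' => hfree.2.1 ?_, hk, fun i' j' hb hs => hfree.2.2 ?_⟩
  · exact mem_image.2 ⟨(i, j'), mem_filter.2 ⟨mem_univ _, hj'⟩, rfl⟩
  · obtain ⟨hi, hj⟩ := box0_eq_box0_iff.1 hb
    exact mem_biUnion.2 ⟨(i', j'), mem_filter.2 ⟨mem_univ _, hj, hs⟩,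
      mem_filter.2 ⟨mem_univ _, hi.symm⟩⟩

theorem availability_boxSymbol
    (hbox : ∀ l, (#{p : Fin (h * w) × Fin (h * w) |
        box0 h w p.1 p.2 = l ∧ S p.1 p.2 ≠ none} : ℝ) ≤ ε * (h * w))
    (hsymrow : ∀ k : Fin (h * w), ∀ p < w,
      (#{q : Fin (h * w) × Fin (h * w) | (q.1 : ℕ) / h = p ∧ S q.1 q.2 = some k} : ℝ) ≤ ε * h)
    (hsymcol : ∀ k : Fin (h * w), ∀ p < h,
      (#{q : Fin (h * w) × Fin (h * w) | (q.2 : ℕ) / w = p ∧ S q.1 q.2 = some k} : ℝ) ≤ ε * w)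
    {l k : Fin (h * w)} (hk : ∀ i j, box0 h w i j = l → S i j ≠ some k) :
    (1 - 3 * ε) * (h * w) ≤
      #{p : Fin (h * w) × Fin (h * w) | box0 h w p.1 p.2 = l ∧ FreeTile h w S p.1 p.2 k} := by
  have hh := pos_left_of_fin_mul l
  have hB := (card_biUnion_le_of_card_eq
    (F := fun q : Fin (h * w) × Fin (h * w) =>
      ({q.1} : Finset (Fin (h * w))) ×ˢ ({j | (j : ℕ) / w = l % h} : Finset (Fin (h * w))))
    (fun q _ => by rw [card_product, card_singleton, one_mul,
      card_colBundle (pos_right_of_fin_mul l) (Nat.mod_lt _ hh)])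
    (hsymrow k _ (div_lt_left_of_fin_mul l))).trans_eq (mul_assoc _ _ _)
  have hC := (card_biUnion_le_of_card_eq
    (F := fun q : Fin (h * w) × Fin (h * w) =>
      ({i | (i : ℕ) / h = l / h} : Finset (Fin (h * w))) ×ˢ ({q.2} : Finset (Fin (h * w))))
    (fun q _ => by rw [card_product, card_singleton, mul_one,
      card_rowBundle hh (div_lt_left_of_fin_mul l)])
    (hsymcol k _ (Nat.mod_lt l hh))).trans_eq ((mul_right_comm _ _ _).trans (mul_assoc _ _ _))
  rw [← filter_filter]
  refine le_card_filter_of_cover (by simp [card_filter_box0_eq]) (fun p hp hfree => ?_)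
    (hbox l) hB hC
  have hpl : box0 h w p.1 p.2 = l := (mem_filter.1 hp).2
  obtain ⟨hi, hj⟩ := box0_eq_iff.1 hpl
  by_contra! hbad
  refine hfree ⟨by simpa [hpl] using hbad.1, fun j' hj' => hbad.2.1 ?_, fun i' hi' => hbad.2.2 ?_,
    fun i' j' hb => hk i' j' (hb.trans hpl)⟩
  · exact mem_biUnion.2 ⟨(p.1, j'), mem_filter.2 ⟨mem_univ _, hi, hj'⟩,
      mem_product.2 ⟨mem_singleton_self _, mem_filter.2 ⟨mem_univ _, hj⟩⟩⟩
  · exact mem_biUnion.2 ⟨(i', p.2), mem_filter.2 ⟨mem_univ _, hj, hi'⟩,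
      mem_product.2 ⟨mem_filter.2 ⟨mem_univ _, hi⟩, mem_singleton_self _⟩⟩

end Sudoku

theorem eps_dense_availability_general (h w : ℕ) (ε : ℝ)
    (S : Fin (h * w) → Fin (h * w) → Option (Fin (h * w)))
    -- each row, column and box has at most `ε n` filled cells
    (hrow : ∀ i, ((Finset.univ.filter fun j => S i j ≠ none).card : ℝ) ≤ ε * (h * w))
    (hcol : ∀ j, ((Finset.univ.filter fun i => S i j ≠ none).card : ℝ) ≤ ε * (h * w))
    (hbox : ∀ l, ((Finset.univ.filter fun p : Fin (h * w) × Fin (h * w) =>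
        box0 h w p.1 p.2 = l ∧ S p.1 p.2 ≠ none).card : ℝ) ≤ ε * (h * w))
    -- each symbol occurs at most `ε h` times in any row bundle
    (hsymrow : ∀ k : Fin (h * w), ∀ p < w,
      ((Finset.univ.filter fun q : Fin (h * w) × Fin (h * w) =>
        (q.1 : ℕ) / h = p ∧ S q.1 q.2 = some k).card : ℝ) ≤ ε * h)
    -- and at most `ε w` times in any column bundle
    (hsymcol : ∀ k : Fin (h * w), ∀ p < h,
      ((Finset.univ.filter fun q : Fin (h * w) × Fin (h * w) =>
        (q.2 : ℕ) / w = p ∧ S q.1 q.2 = some k).card : ℝ) ≤ ε * w) :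
    -- row-column edges
    (∀ i j, S i j = none →
      (1 - 3 * ε) * (h * w) ≤
        ((Finset.univ.filter fun k => FreeTile h w S i j k).card : ℝ)) ∧
    -- row-symbol edges
    (∀ i k, (∀ j, S i j ≠ some k) →
      (1 - 3 * ε) * (h * w) ≤
        ((Finset.univ.filter fun j => FreeTile h w S i j k).card : ℝ)) ∧
    -- column-symbol edges
    (∀ j k, (∀ i, S i j ≠ some k) →
      (1 - 3 * ε) * (h * w) ≤
        ((Finset.univ.filter fun i => FreeTile h w S i j k).card : ℝ)) ∧
    -- box-symbol edges
    (∀ l k, (∀ i j, box0 h w i j = l → S i j ≠ some k) →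
      (1 - 3 * ε) * (h * w) ≤
        ((Finset.univ.filter fun p : Fin (h * w) × Fin (h * w) =>
          box0 h w p.1 p.2 = l ∧ FreeTile h w S p.1 p.2 k).card : ℝ)) :=
  ⟨fun _ _ hij => availability_rowCol S hrow hcol hbox hij,
    fun _ _ hk => availability_rowSymbol S hrow hsymrow hk,
    fun _ _ hk => availability_colSymbol S hcol hsymcol hk,
    fun _ _ hk => availability_boxSymbol S hbox hsymrow hsymcol hk⟩

/-- An `ε`-dense partial Sudoku has the `(1-3ε)`-availability property: every
surviving edge of `G_S` lies in at least `(1-3ε)n` tiles of `G_S`. -/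
theorem eps_dense_availability (h w : ℕ) (hh : 2 ≤ h) (hww : 2 ≤ w) (ε : ℝ)
    (S : Fin (h * w) → Fin (h * w) → Option (Fin (h * w)))
    -- `S` is a partial Sudoku: no symbol repeats in a row, column, or box
    (hrowinj : ∀ i j₁ j₂ k, S i j₁ = some k → S i j₂ = some k → j₁ = j₂)
    (hcolinj : ∀ i₁ i₂ j k, S i₁ j = some k → S i₂ j = some k → i₁ = i₂)
    (hboxinj : ∀ i₁ j₁ i₂ j₂ k, box0 h w i₁ j₁ = box0 h w i₂ j₂ →
      S i₁ j₁ = some k → S i₂ j₂ = some k → i₁ = i₂ ∧ j₁ = j₂)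
    -- each row, column and box has at most `ε n` filled cells
    (hrow : ∀ i, ((Finset.univ.filter fun j => S i j ≠ none).card : ℝ) ≤ ε * (h * w))
    (hcol : ∀ j, ((Finset.univ.filter fun i => S i j ≠ none).card : ℝ) ≤ ε * (h * w))
    (hbox : ∀ l, ((Finset.univ.filter fun p : Fin (h * w) × Fin (h * w) =>
        box0 h w p.1 p.2 = l ∧ S p.1 p.2 ≠ none).card : ℝ) ≤ ε * (h * w))
    -- each symbol occurs at most `ε h` times in any row bundle
    (hsymrow : ∀ k : Fin (h * w), ∀ p < w,
      ((Finset.univ.filter fun q : Fin (h * w) × Fin (h * w) =>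
        (q.1 : ℕ) / h = p ∧ S q.1 q.2 = some k).card : ℝ) ≤ ε * h)
    -- and at most `ε w` times in any column bundle
    (hsymcol : ∀ k : Fin (h * w), ∀ p < h,
      ((Finset.univ.filter fun q : Fin (h * w) × Fin (h * w) =>
        (q.2 : ℕ) / w = p ∧ S q.1 q.2 = some k).card : ℝ) ≤ ε * w) :
    -- row-column edges
    (∀ i j, S i j = none →
      (1 - 3 * ε) * (h * w) ≤
        ((Finset.univ.filter fun k => FreeTile h w S i j k).card : ℝ)) ∧
    -- row-symbol edges
    (∀ i k, (∀ j, S i j ≠ some k) →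
      (1 - 3 * ε) * (h * w) ≤
        ((Finset.univ.filter fun j => FreeTile h w S i j k).card : ℝ)) ∧
    -- column-symbol edges
    (∀ j k, (∀ i, S i j ≠ some k) →
      (1 - 3 * ε) * (h * w) ≤
        ((Finset.univ.filter fun i => FreeTile h w S i j k).card : ℝ)) ∧
    -- box-symbol edges
    (∀ l k, (∀ i j, box0 h w i j = l → S i j ≠ some k) →
      (1 - 3 * ε) * (h * w) ≤
        ((Finset.univ.filter fun p : Fin (h * w) × Fin (h * w) =>
          box0 h w p.1 p.2 = l ∧ FreeTile h w S p.1 p.2 k).card : ℝ)) :=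
  eps_dense_availability_general h w ε S hrow hcol hbox hsymrow hsymcol
end

section
/- Suppose 0 < ε, δ < 1/6, n ≥ m, and P is an ε-dense m×n partial latin rectangle. Let A₁,...,A_n ⊆ [n] with |A_j| < δm for each j and each symbol k belonging to fewer than δm of the sets A_j. Then P is contained in a 3(δ+ε)-dense m×n partial latin rectangle P′ such that for each j, column j of P′ contains all elements of A_j. -/
/-!
The extension is built greedily. The required pairs `(j, k)` with `k ∈ A j` are handled one at
a time: if `k` is not yet in column `j`, it is written into a row `i` such that cell `(i, j)` is
empty, `k` does not occur in row `i`, and row `i` has fewer than `3(δ+ε)n` filled cells. Column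
`j` has fewer than `(ε+δ)m` filled cells and `k` occurs in fewer than `(ε+δ)m` rows, since each
column and symbol has its final count charged in advance: `ε m` for `P` plus `|A j|`, resp. the
number of sets containing `k`. The whole array never holds more than `(ε+δ)mn` symbols, so fewer
than `(1 - 2(ε+δ))m + 2` rows are full. These three bounds sum to less than `m`, so a suitable
row always exists.
-/

open Finset

theorem Finset.card_filter_insert_of_notMem {β : Type*} [DecidableEq β] {s : Finset β} {a : β}
    (P : β → Prop) [DecidablePred P] (ha : a ∉ s) :
    #{x ∈ insert a s | P x} = #{x ∈ s | P x} + if P a then 1 else 0 := by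
  rw [filter_insert]
  split_ifs
  · exact card_insert_of_notMem fun h => ha (mem_filter.1 h).1
  · rfl

namespace PartialLatin

variable {ι κ α : Type*}

def IsPartialLatin (Q : ι → κ → Option α) : Prop :=
  (∀ i j₁ j₂ k, Q i j₁ = some k → Q i j₂ = some k → j₁ = j₂) ∧
  (∀ i₁ i₂ j k, Q i₁ j = some k → Q i₂ j = some k → i₁ = i₂)

section Place

variable [DecidableEq ι] [DecidableEq κ] {Q : ι → κ → Option α} {i : ι} {j : κ} {k : α}

def place (Q : ι → κ → Option α) (i : ι) (j : κ) (k : α) : ι → κ → Option α :=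
  fun i' j' => if i' = i ∧ j' = j then some k else Q i' j'

theorem place_self : place Q i j k i j = some k := if_pos ⟨rfl, rfl⟩

theorem place_of_some (hQ : Q i j = none) {i' : ι} {j' : κ} {k' : α} (h : Q i' j' = some k') :
    place Q i j k i' j' = some k' := by
  rw [place, if_neg]
  · exact h
  · rintro ⟨rfl, rfl⟩
    simp [hQ] at h

theorem IsPartialLatin.place (hQ : IsPartialLatin Q) (hrow : ∀ j', Q i j' ≠ some k)
    (hcol : ∀ i', Q i' j ≠ some k) : IsPartialLatin (place Q i j k) := by
  refine ⟨fun i' j₁ j₂ k' h₁ h₂ => ?_, fun i₁ i₂ j' k' h₁ h₂ => ?_⟩ <;>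
    simp only [PartialLatin.place] at h₁ h₂ <;> split_ifs at h₁ h₂ <;> grind [IsPartialLatin]

end Place

section Counts

variable [Fintype ι] [Fintype κ] (Q : ι → κ → Option α)

def rowCount (i : ι) : ℕ := #{j | Q i j ≠ none}

def colCount (j : κ) : ℕ := #{i | Q i j ≠ none}

def symCount [DecidableEq α] (k : α) : ℕ := #{p : ι × κ | Q p.1 p.2 = some k}

theorem sum_rowCount_eq_sum_colCount : ∑ i, rowCount Q i = ∑ j, colCount Q j := by
  simp only [rowCount, colCount, card_filter]
  exact sum_comm

theorem card_rowsContaining_le_symCount [DecidableEq α] (k : α) :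
    #{i | ∃ j, Q i j = some k} ≤ symCount Q k :=
  card_le_card_of_surjOn Prod.fst fun i hi => by
    obtain ⟨j, hj⟩ := (mem_filter.1 hi).2
    exact ⟨(i, j), by simp [hj], rfl⟩

theorem card_fullRows_mul_le (R : ℕ) : #{i | R ≤ rowCount Q i} * R ≤ ∑ i, rowCount Q i :=
  calc #{i | R ≤ rowCount Q i} * R = #{i | R ≤ rowCount Q i} • R := (smul_eq_mul ..).symm
    _ ≤ ∑ i ∈ {i | R ≤ rowCount Q i}, rowCount Q i :=
      card_nsmul_le_sum _ _ _ fun _ hi => (mem_filter.1 hi).2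
    _ ≤ ∑ i, rowCount Q i := sum_le_univ_sum_of_nonneg fun _ => Nat.zero_le _

theorem exists_row_to_place [DecidableEq ι] [DecidableEq α] {j : κ} {k : α} {R : ℕ}
    (h : colCount Q j + symCount Q k + #{i | R ≤ rowCount Q i} < Fintype.card ι) :
    ∃ i, Q i j = none ∧ (∀ j', Q i j' ≠ some k) ∧ rowCount Q i < R := by
  let bad : Finset ι := ({i | Q i j ≠ none} : Finset ι) ∪ ({i | ∃ j', Q i j' = some k} : Finset ι)
    ∪ ({i | R ≤ rowCount Q i} : Finset ι)
  have hbad : #bad < #(univ : Finset ι) :=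
    calc #bad ≤ colCount Q j + #{i | ∃ j', Q i j' = some k} + #{i | R ≤ rowCount Q i} :=
          (card_union_le _ _).trans (by grw [card_union_le]; rfl)
      _ ≤ colCount Q j + symCount Q k + #{i | R ≤ rowCount Q i} := by
          gcongr; exact card_rowsContaining_le_symCount Q k
      _ < #(univ : Finset ι) := h
  obtain ⟨i, -, hi⟩ := exists_mem_notMem_of_card_lt_card hbad
  simp only [bad, mem_union, mem_filter, mem_univ, true_and, not_or, not_not, not_exists,
    not_le] at hi
  exact ⟨i, hi.1.1, hi.1.2, hi.2⟩

end Counts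

section PlaceCounts

variable [DecidableEq ι] [DecidableEq κ] {Q : ι → κ → Option α} {i : ι} {j : κ} {k : α}

theorem rowCount_place [Fintype κ] (hQ : Q i j = none) (i' : ι) :
    rowCount (place Q i j k) i' = rowCount Q i' + if i = i' then 1 else 0 := by
  have key : ∀ j', (if place Q i j k i' j' ≠ none then 1 else 0) =
      (if Q i' j' ≠ none then 1 else 0) + if i = i' ∧ j = j' then 1 else 0 := by
    intro j'; unfold place; split_ifs <;> grind
  simp [rowCount, card_filter, key, sum_add_distrib, ite_and]

theorem colCount_place [Fintype ι] (hQ : Q i j = none) (j' : κ) :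
    colCount (place Q i j k) j' = colCount Q j' + if j = j' then 1 else 0 := by
  have key : ∀ i', (if place Q i j k i' j' ≠ none then 1 else 0) =
      (if Q i' j' ≠ none then 1 else 0) + if i = i' ∧ j = j' then 1 else 0 := by
    intro i'; unfold place; split_ifs <;> grind
  simp [colCount, card_filter, key, sum_add_distrib, ite_and]

theorem symCount_place [Fintype ι] [Fintype κ] [DecidableEq α] (hQ : Q i j = none) (k' : α) :
    symCount (place Q i j k) k' = symCount Q k' + if k = k' then 1 else 0 := by
  have key : ∀ p : ι × κ, (if place Q i j k p.1 p.2 = some k' then 1 else 0) =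
      (if Q p.1 p.2 = some k' then 1 else 0) + if p = (i, j) ∧ k = k' then 1 else 0 := by
    rintro ⟨i', j'⟩; unfold place; split_ifs <;> grind
  rw [symCount, symCount, card_filter, card_filter]
  simp only [key, sum_add_distrib, ite_and, sum_ite_eq', mem_univ, if_true]

end PlaceCounts

/-- With rows capped at about `3cn` filled cells and at most `cmn` cells filled in total, fewer
than `(1 - 2c)m + 2` rows are at the cap; this is what the factor `3` is needed for. -/
theorem lt_one_sub_two_mul_add_two_of_mul_lt {c m n b : ℝ} (hc : c < 1 / 3) (hm : 0 ≤ m)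
    (hmn : m ≤ n) (hcm : 1 < c * m) (hb : b * (3 * c * n - 1) < c * m * n) :
    b < (1 - 2 * c) * m + 2 := by
  by_contra! h
  have hc0 : 0 < c := pos_of_mul_pos_left (by linarith) hm
  have hcn : 1 < c * n := hcm.trans_le (mul_le_mul_of_nonneg_left hmn hc0.le)
  have : ((1 - 2 * c) * m + 2) * (3 * c * n - 1) ≤ b * (3 * c * n - 1) :=
    mul_le_mul_of_nonneg_right h (by linarith)
  nlinarith [mul_nonneg (mul_nonneg (by linarith : (0 : ℝ) ≤ 1 - 3 * c) hm)
    (by linarith : (0 : ℝ) ≤ c * n - 1)]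

section Demands

variable [Fintype κ] [Fintype α] (A : κ → Finset α)

def demands [DecidableEq α] : Finset (κ × α) := {p | p.2 ∈ A p.1}

theorem card_demands_filter_fst [DecidableEq κ] [DecidableEq α] (j : κ) :
    #{p ∈ demands A | p.1 = j} = #(A j) := by
  have : {p ∈ demands A | p.1 = j} = {j} ×ˢ A j := by
    ext ⟨j', k⟩
    simp only [demands, mem_filter, mem_univ, true_and, mem_product, mem_singleton]
    grind
  rw [this, card_product, card_singleton, one_mul]

theorem card_demands_filter_snd [DecidableEq α] (k : α) :
    #{p ∈ demands A | p.2 = k} = #{j | k ∈ A j} := by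
  have : {p ∈ demands A | p.2 = k} = ({j | k ∈ A j} : Finset κ) ×ˢ {k} := by
    ext ⟨j, k'⟩
    simp only [demands, mem_filter, mem_univ, true_and, mem_product, mem_singleton]
    grind
  rw [this, card_product, card_singleton, mul_one]

end Demands

section Greedy

variable [Fintype ι] [Fintype κ] [DecidableEq κ] [DecidableEq α]
  {R : ℕ} {Bcol : κ → ℕ} {Bsym : α → ℕ} {D E : Finset (κ × α)} {Q : ι → κ → Option α}

/-- Invariant of the greedy filling: the pending demands `D` are charged to the budgets of their
columns and symbols in advance. -/
def WithinBudget (R : ℕ) (Bcol : κ → ℕ) (Bsym : α → ℕ) (D : Finset (κ × α))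
    (Q : ι → κ → Option α) : Prop :=
  (∀ i, rowCount Q i ≤ R) ∧ (∀ j, colCount Q j + #{p ∈ D | p.1 = j} ≤ Bcol j) ∧
    ∀ k, symCount Q k + #{p ∈ D | p.2 = k} ≤ Bsym k

theorem WithinBudget.mono (hDE : D ⊆ E) (hQ : WithinBudget R Bcol Bsym E Q) :
    WithinBudget R Bcol Bsym D Q :=
  ⟨hQ.1, fun j => le_trans (by grw [filter_subset_filter _ hDE]) (hQ.2.1 j),
    fun k => le_trans (by grw [filter_subset_filter _ hDE]) (hQ.2.2 k)⟩

theorem WithinBudget.sum_rowCount_lt (hQ : WithinBudget R Bcol Bsym D Q) (hD : D.Nonempty) :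
    ∑ i, rowCount Q i < ∑ j, Bcol j :=
  calc ∑ i, rowCount Q i < ∑ j, colCount Q j + #D := by
        rw [sum_rowCount_eq_sum_colCount]; exact Nat.lt_add_of_pos_right hD.card_pos
    _ = ∑ j, (colCount Q j + #{p ∈ D | p.1 = j}) := by
        rw [sum_add_distrib, card_eq_sum_card_fiberwise fun p _ => mem_univ p.1]
    _ ≤ ∑ j, Bcol j := sum_le_sum fun j _ => hQ.2.1 j

theorem WithinBudget.place [DecidableEq ι] {p : κ × α} {i : ι} (hp : p ∉ D)
    (hQ : WithinBudget R Bcol Bsym (insert p D) Q) (hi : Q i p.1 = none) (hR : rowCount Q i < R) :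
    WithinBudget R Bcol Bsym D (place Q i p.1 p.2) := by
  refine ⟨fun i' => ?_, fun j => ?_, fun k => ?_⟩
  · rw [rowCount_place hi]
    split_ifs with h
    · exact h ▸ hR
    · simpa using hQ.1 i'
  · have := hQ.2.1 j
    rw [card_filter_insert_of_notMem _ hp] at this
    rw [colCount_place hi]
    split_ifs at this ⊢ <;> omega
  · have := hQ.2.2 k
    rw [card_filter_insert_of_notMem _ hp] at this
    rw [symCount_place hi]
    split_ifs at this ⊢ <;> omega

/-- In `hroom`, `b` stands for the number of rows already at the cap `R`; together with the
at most `Bcol p.1 - 1` rows filled in column `p.1` and the at most `Bsym p.2 - 1` rows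
containing `p.2`, they must leave a row free. -/
theorem exists_extension_step [DecidableEq ι] {p : κ × α} (hp : p ∉ D)
    (hroom : ∀ b, b * R < ∑ j, Bcol j → Bcol p.1 + Bsym p.2 + b < Fintype.card ι + 2)
    (hQ : IsPartialLatin Q) (hB : WithinBudget R Bcol Bsym (insert p D) Q) :
    ∃ Q', IsPartialLatin Q' ∧ (∀ i j k, Q i j = some k → Q' i j = some k) ∧
      (∃ i, Q' i p.1 = some p.2) ∧ WithinBudget R Bcol Bsym D Q' := by
  by_cases hpresent : ∃ i, Q i p.1 = some p.2
  · exact ⟨Q, hQ, fun _ _ _ h => h, hpresent, hB.mono (subset_insert p D)⟩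
  push Not at hpresent
  have hcol := hB.2.1 p.1
  have hsym := hB.2.2 p.2
  rw [card_filter_insert_of_notMem _ hp, if_pos rfl] at hcol hsym
  have hfull := (card_fullRows_mul_le Q R).trans_lt (hB.sum_rowCount_lt (insert_nonempty p D))
  obtain ⟨i, hi, hrow, hR⟩ := exists_row_to_place Q (j := p.1) (k := p.2) (R := R)
    (by have := hroom _ hfull; omega)
  exact ⟨place Q i p.1 p.2, hQ.place hrow hpresent, fun _ _ _ => place_of_some hi,
    ⟨i, place_self⟩, hB.place hp hi hR⟩

theorem exists_extension_of_withinBudget [DecidableEq ι]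
    (hroom : ∀ p ∈ D, ∀ b, b * R < ∑ j, Bcol j → Bcol p.1 + Bsym p.2 + b < Fintype.card ι + 2)
    (hQ : IsPartialLatin Q) (hB : WithinBudget R Bcol Bsym D Q) :
    ∃ Q', IsPartialLatin Q' ∧ (∀ i j k, Q i j = some k → Q' i j = some k) ∧
      WithinBudget R Bcol Bsym ∅ Q' ∧ ∀ p ∈ D, ∃ i, Q' i p.1 = some p.2 := by
  induction D using Finset.induction_on generalizing Q with
  | empty => exact ⟨Q, hQ, fun _ _ _ h => h, hB, by simp⟩
  | insert p D hp ih =>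
    obtain ⟨Q₁, hQ₁, hext₁, ⟨i, hi⟩, hB₁⟩ :=
      exists_extension_step hp (hroom p (mem_insert_self p D)) hQ hB
    obtain ⟨Q₂, hQ₂, hext₂, hB₂, hcover⟩ :=
      ih (fun q hq => hroom q (mem_insert_of_mem hq)) hQ₁ hB₁
    refine ⟨Q₂, hQ₂, fun _ _ _ h => hext₂ _ _ _ (hext₁ _ _ _ h), hB₂, fun q hq => ?_⟩
    rcases mem_insert.1 hq with rfl | hq
    · exact ⟨i, hext₂ _ _ _ hi⟩
    · exact hcover q hq

theorem exists_extension_of_lt_mul_card [DecidableEq ι] (c : ℝ) (hc : c < 1 / 3)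
    (hικ : Fintype.card ι ≤ Fintype.card κ) (hBcol : ∀ j, (Bcol j : ℝ) < c * Fintype.card ι)
    (hBsym : ∀ k, (Bsym k : ℝ) < c * Fintype.card ι) (hQ : IsPartialLatin Q)
    (hB : WithinBudget ⌊3 * c * Fintype.card κ⌋₊ Bcol Bsym D Q) :
    ∃ Q', IsPartialLatin Q' ∧ (∀ i j k, Q i j = some k → Q' i j = some k) ∧
      (∀ i, (rowCount Q' i : ℝ) ≤ 3 * c * Fintype.card κ) ∧
      (∀ j, (colCount Q' j : ℝ) < c * Fintype.card ι) ∧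
      (∀ k, (symCount Q' k : ℝ) < c * Fintype.card ι) ∧
      ∀ p ∈ D, ∃ i, Q' i p.1 = some p.2 := by
  suffices hroom : ∀ p ∈ D, ∀ b, b * ⌊3 * c * Fintype.card κ⌋₊ < ∑ j, Bcol j →
      Bcol p.1 + Bsym p.2 + b < Fintype.card ι + 2 by
    obtain ⟨Q', hQ', hQQ', hB', hcover⟩ := exists_extension_of_withinBudget hroom hQ hB
    refine ⟨Q', hQ', hQQ', fun i => ?_, fun j => ?_, fun k => ?_, hcover⟩
    · have hκ : Nonempty κ :=
        Fintype.card_pos_iff.1 ((Fintype.card_pos_iff.2 ⟨i⟩).trans_le hικ)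
      have hc : 0 < c :=
        pos_of_mul_pos_left ((Nat.cast_nonneg _).trans_lt (hBcol hκ.some)) (Nat.cast_nonneg _)
      exact (Nat.cast_le.2 (hB'.1 i)).trans (Nat.floor_le (by positivity))
    · exact lt_of_le_of_lt (by simpa using hB'.2.1 j) (hBcol j)
    · exact lt_of_le_of_lt (by simpa using hB'.2.2 k) (hBsym k)
  intro p hp b hb
  have hBp : 1 ≤ Bcol p.1 := by
    have : 0 < #{q ∈ D | q.1 = p.1} := card_pos.2 ⟨p, mem_filter.2 ⟨hp, rfl⟩⟩
    have := hB.2.1 p.1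
    omega
  have hcm : 1 < c * Fintype.card ι := lt_of_le_of_lt (by exact_mod_cast hBp) (hBcol p.1)
  have hsum : ((∑ j, Bcol j : ℕ) : ℝ) ≤ c * Fintype.card ι * Fintype.card κ := by
    push_cast
    grw [sum_le_sum fun j _ => (hBcol j).le]
    simp [mul_comm]
  have hR : 3 * c * Fintype.card κ - 1 < ⌊3 * c * Fintype.card κ⌋₊ := by
    linarith [Nat.lt_floor_add_one (3 * c * Fintype.card κ)]
  have hb' : (b : ℝ) < (1 - 2 * c) * Fintype.card ι + 2 := by
    refine lt_one_sub_two_mul_add_two_of_mul_lt hc (Nat.cast_nonneg _)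
      (Nat.cast_le.2 hικ) hcm ?_
    calc (b : ℝ) * (3 * c * Fintype.card κ - 1) ≤ b * ⌊3 * c * Fintype.card κ⌋₊ := by gcongr
      _ < ∑ j, Bcol j := by exact_mod_cast hb
      _ ≤ c * Fintype.card ι * Fintype.card κ := hsum
  have := hBcol p.1
  have := hBsym p.2
  exact_mod_cast (by linarith : (Bcol p.1 + Bsym p.2 + b : ℝ) < Fintype.card ι + 2)

end Greedy

end PartialLatin

open PartialLatin

theorem latin_rectangle_extension (m n : ℕ) (hmn : m ≤ n) (ε δ : ℝ)
    (hε : 0 < ε) (hε' : ε < 1 / 6) (hδ : 0 < δ) (hδ' : δ < 1 / 6)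
    (P : Fin m → Fin n → Option (Fin n))
    -- `P` is a partial latin rectangle
    (hProw : ∀ i j₁ j₂ k, P i j₁ = some k → P i j₂ = some k → j₁ = j₂)
    (hPcol : ∀ i₁ i₂ j k, P i₁ j = some k → P i₂ j = some k → i₁ = i₂)
    -- `P` is ε-dense
    (hProwd : ∀ i, ((Finset.univ.filter fun j => P i j ≠ none).card : ℝ) ≤ ε * n)
    (hPcold : ∀ j, ((Finset.univ.filter fun i => P i j ≠ none).card : ℝ) ≤ ε * m)
    (hPsymd : ∀ k, ((Finset.univ.filter fun p : Fin m × Fin n =>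
        P p.1 p.2 = some k).card : ℝ) ≤ ε * m)
    (A : Fin n → Finset (Fin n))
    (hA : ∀ j, ((A j).card : ℝ) < δ * m)
    (hA' : ∀ k, ((Finset.univ.filter fun j => k ∈ A j).card : ℝ) < δ * m) :
    ∃ P' : Fin m → Fin n → Option (Fin n),
      -- `P'` is a partial latin rectangle
      (∀ i j₁ j₂ k, P' i j₁ = some k → P' i j₂ = some k → j₁ = j₂) ∧
      (∀ i₁ i₂ j k, P' i₁ j = some k → P' i₂ j = some k → i₁ = i₂) ∧
      -- `P'` contains `P`
      (∀ i j k, P i j = some k → P' i j = some k) ∧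
      -- `P'` is `3(δ+ε)`-dense
      (∀ i, ((Finset.univ.filter fun j => P' i j ≠ none).card : ℝ) ≤ 3 * (δ + ε) * n) ∧
      (∀ j, ((Finset.univ.filter fun i => P' i j ≠ none).card : ℝ) ≤ 3 * (δ + ε) * m) ∧
      (∀ k, ((Finset.univ.filter fun p : Fin m × Fin n =>
          P' p.1 p.2 = some k).card : ℝ) ≤ 3 * (δ + ε) * m) ∧
      -- column `j` of `P'` contains the elements of `A j`
      (∀ j, ∀ k ∈ A j, ∃ i, P' i j = some k) := by
  have hc : δ + ε < 1 / 3 := by linarith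
  have hBcol (j : Fin n) :
      ((colCount P j + #(A j) : ℕ) : ℝ) < (δ + ε) * Fintype.card (Fin m) := by
    have : (colCount P j : ℝ) ≤ ε * m := hPcold j
    push_cast [Fintype.card_fin]; linarith [hA j]
  have hBsym (k : Fin n) :
      ((symCount P k + #{j | k ∈ A j} : ℕ) : ℝ) < (δ + ε) * Fintype.card (Fin m) := by
    have : (symCount P k : ℝ) ≤ ε * m := hPsymd k
    push_cast [Fintype.card_fin]; linarith [hA' k]
  have hB : WithinBudget ⌊3 * (δ + ε) * Fintype.card (Fin n)⌋₊ (fun j => colCount P j + #(A j))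
      (fun k => symCount P k + #{j | k ∈ A j}) (demands A) P := by
    refine ⟨fun i => Nat.le_floor ?_, fun j => by rw [card_demands_filter_fst],
      fun k => by rw [card_demands_filter_snd]⟩
    have : (rowCount P i : ℝ) ≤ ε * n := hProwd i
    rw [Fintype.card_fin]
    nlinarith
  obtain ⟨Q, hQ, hPQ, hrow, hcol, hsym, hcover⟩ := exists_extension_of_lt_mul_card (δ + ε) hc
    (by simpa using hmn) hBcol hBsym ⟨hProw, hPcol⟩ hB
  refine ⟨Q, hQ.1, hQ.2, hPQ, fun i => ?_, fun j => ?_, fun k => ?_,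
    fun j k hk => hcover (j, k) (by simpa [demands] using hk)⟩
  · exact (hrow i).trans (by rw [Fintype.card_fin])
  · exact (hcol j).le.trans (by rw [Fintype.card_fin]; nlinarith)
  · exact (hsym k).le.trans (by rw [Fintype.card_fin]; nlinarith)
end
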